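/- arXiv:1602.00976 — 2 statements merged into one kernel-verified Lean document; each statement's English description precedes it below -/
import Mathlib

section
/- Suppose condition (I¹_ρ) holds for some ρ > 0: there exists a finite positive Borel measure dA^ρ on [0,1], with α^ρ[u] := ∫₀¹ u(t) dA^ρ(t) and 𝒦^ρ(s) := ∫₀¹ k(t,s) dA^ρ(t), such that α^ρ[γ] < 1, H[u] ≤ α^ρ[u] for every u ∈ K with ‖u‖ = ρ, and f^{cρ,ρ} · sup_{t∈[0,1]} { γ(t)/(1−α^ρ[γ]) · ∫₀¹ 𝒦^ρ(s) g(s) ds + ∫₀¹ k(t,s) g(s) ds } < 1, where f^{cρ,ρ} := ess sup { f(t,u)/ρ : 0 ≤ t ≤ 1, cρ ≤ u ≤ ρ }. Then for every u ∈ K with ‖u‖ = ρ and every real μ ≥ 1 one has μ·u ≠ Tu. -/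
open MeasureTheory Set

/-- Supremum norm of `u` on `[0,1]`. -/
noncomputable def nrm (u : ℝ → ℝ) : ℝ := sSup ((fun t => |u t|) '' Icc (0:ℝ) 1)

/-- Minimum (infimum) of `u` on `[a,b]`. -/
noncomputable def minOnIcc (u : ℝ → ℝ) (a b : ℝ) : ℝ := sInf (u '' Icc a b)

/-- The perturbed Hammerstein operator `Tu(t) = γ(t)H[u] + ∫₀¹ k(t,s)g(s)f(s,u(s)) ds`. -/
noncomputable def Tham (k : ℝ → ℝ → ℝ) (g : ℝ → ℝ) (f : ℝ → ℝ → ℝ) (γ : ℝ → ℝ)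
    (H : (ℝ → ℝ) → ℝ) (u : ℝ → ℝ) (t : ℝ) : ℝ :=
  γ t * H u + ∫ s in (0:ℝ)..1, k t s * g s * f s (u s)

/-- Condition (I¹_ρ) for strongly positive kernels. -/
def CondI1 (k : ℝ → ℝ → ℝ) (g : ℝ → ℝ) (f : ℝ → ℝ → ℝ) (γ : ℝ → ℝ)
    (H : (ℝ → ℝ) → ℝ) (K : Set (ℝ → ℝ)) (c ρ : ℝ) : Prop :=
  ∃ μA : Measure ℝ, IsFiniteMeasure μA ∧ μA ((Icc (0:ℝ) 1)ᶜ) = 0 ∧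
    (∫ t, γ t ∂μA) < 1 ∧
    (∀ u ∈ K, nrm u = ρ → H u ≤ ∫ t, u t ∂μA) ∧
    ∃ fb : ℝ,
      (∀ᵐ t ∂(volume.restrict (Icc (0:ℝ) 1)), ∀ u : ℝ, c * ρ ≤ u → u ≤ ρ → f t u ≤ fb * ρ) ∧
      fb * sSup ((fun t => γ t / (1 - ∫ t', γ t' ∂μA) *
          (∫ s in (0:ℝ)..1, (∫ t', k t' s ∂μA) * g s) +
          ∫ s in (0:ℝ)..1, k t s * g s) '' Icc (0:ℝ) 1) < 1


/-!
Suppose `μ u = T u` with `‖u‖ = ρ`, so that `cρ ≤ u ≤ ρ` on `[0,1]`. Integrating the equation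
against `dA^ρ` and using `H[u] ≤ α^ρ[u] ≤ μ α^ρ[u]` gives, after exchanging the order of
integration, `H[u] (1 - α^ρ[γ]) ≤ f^{cρ,ρ} ρ ∫ 𝒦^ρ g`. Evaluating the equation at a point where
`u` attains `ρ` then yields `μ ρ ≤ f^{cρ,ρ} ρ sup_t (…) < ρ`, contradicting `μ ≥ 1`.
-/

lemma nrm_nonneg (u : ℝ → ℝ) : 0 ≤ nrm u :=
  Real.sSup_nonneg <| by rintro _ ⟨t, -, rfl⟩; exact abs_nonneg _

section SupNorm

variable {u : ℝ → ℝ}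

lemma abs_le_nrm (hu : ContinuousOn u (Icc 0 1)) {t : ℝ} (ht : t ∈ Icc (0:ℝ) 1) :
    |u t| ≤ nrm u :=
  le_csSup (isCompact_Icc.image_of_continuousOn hu.abs).bddAbove ⟨t, ht, rfl⟩

lemma exists_abs_eq_nrm (hu : ContinuousOn u (Icc 0 1)) : ∃ t ∈ Icc (0:ℝ) 1, |u t| = nrm u :=
  (isCompact_Icc.image_of_continuousOn hu.abs).sSup_mem ((nonempty_Icc.2 zero_le_one).image _)

lemma minOnIcc_le {a b t : ℝ} (hu : ContinuousOn u (Icc a b)) (ht : t ∈ Icc a b) :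
    minOnIcc u a b ≤ u t :=
  csInf_le (isCompact_Icc.image_of_continuousOn hu).bddBelow ⟨t, ht, rfl⟩

lemma mem_Icc_of_mul_nrm_le_minOnIcc {c t : ℝ} (hu : ContinuousOn u (Icc 0 1))
    (hmin : c * nrm u ≤ minOnIcc u 0 1) (ht : t ∈ Icc (0:ℝ) 1) :
    u t ∈ Icc (c * nrm u) (nrm u) :=
  ⟨hmin.trans (minOnIcc_le hu ht), (le_abs_self _).trans (abs_le_nrm hu ht)⟩

lemma exists_eq_nrm_of_mul_nrm_le_minOnIcc {c : ℝ} (hc : 0 ≤ c) (hu : ContinuousOn u (Icc 0 1))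
    (hmin : c * nrm u ≤ minOnIcc u 0 1) : ∃ t ∈ Icc (0:ℝ) 1, u t = nrm u := by
  obtain ⟨t, ht, hut⟩ := exists_abs_eq_nrm hu
  have hut0 : 0 ≤ u t :=
    (mul_nonneg hc (nrm_nonneg u)).trans (mem_Icc_of_mul_nrm_le_minOnIcc hu hmin ht).1
  exact ⟨t, ht, by rwa [abs_of_nonneg hut0] at hut⟩

end SupNorm

lemma bddAbove_image_add_of_le {F G : ℝ → ℝ} {a b C : ℝ} (hF : ContinuousOn F (Icc a b))
    (hG : ∀ t ∈ Icc a b, G t ≤ C) : BddAbove ((fun t => F t + G t) '' Icc a b) := by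
  obtain ⟨B, hB⟩ := isCompact_Icc.bddAbove_image hF
  refine ⟨B + C, ?_⟩
  rintro _ ⟨t, ht, rfl⟩
  exact add_le_add (hB (mem_image_of_mem _ ht)) (hG t ht)

lemma le_div_one_sub_of_mul_le {h x μ a M : ℝ} (hhx : h ≤ x) (hx : 0 ≤ x) (hμ : 1 ≤ μ)
    (ha : a < 1) (hμx : μ * x ≤ a * h + M) : h ≤ M / (1 - a) := by
  rw [le_div_iff₀ (sub_pos.2 ha)]
  nlinarith [le_mul_of_one_le_left hx hμ]

lemma intervalIntegral_eq_integral_Icc {a b : ℝ} (hab : a ≤ b) (F : ℝ → ℝ) :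
    ∫ s in a..b, F s = ∫ s in Icc a b, F s := by
  rw [intervalIntegral.integral_of_le hab, integral_Icc_eq_integral_Ioc]

lemma nonneg_of_ae_le_mul {f : ℝ → ℝ → ℝ} {ν : Measure ℝ} [(ae ν).NeBot] {a ρ fb : ℝ}
    (hf : ∀ t u, 0 ≤ u → 0 ≤ f t u) (hρ : 0 < ρ) (haρ : a ≤ ρ)
    (hfb : ∀ᵐ t ∂ν, ∀ u, a ≤ u → u ≤ ρ → f t u ≤ fb * ρ) : 0 ≤ fb :=
  let ⟨t, ht⟩ := hfb.exists
  (mul_nonneg_iff_of_pos_right hρ).1 ((hf t ρ hρ.le).trans (ht ρ haρ le_rfl))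

lemma integral_mul_le_const_mul_integral {α : Type*} [MeasurableSpace α] {ν : Measure α}
    {w F : α → ℝ} {M : ℝ} (hw : Integrable w ν) (hw0 : ∀ᵐ s ∂ν, 0 ≤ w s)
    (hF : ∀ᵐ s ∂ν, F s ∈ Icc 0 M) :
    ∫ s, w s * F s ∂ν ≤ M * ∫ s, w s ∂ν := by
  rw [← integral_const_mul]
  refine integral_mono_of_nonneg ?_ (hw.const_mul M) ?_
  · filter_upwards [hw0, hF] with s hws hFs using mul_nonneg hws hFs.1
  · filter_upwards [hw0, hF] with s hws hFs
    rw [mul_comm M]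
    exact mul_le_mul_of_nonneg_left hFs.2 hws

lemma integrable_prod_of_ae_norm_le {α β E : Type*} [MeasurableSpace α] [MeasurableSpace β]
    [NormedAddCommGroup E] {μ : Measure α} {ν : Measure β} [IsFiniteMeasure μ] [SFinite ν]
    {F : α × β → E} {G : β → ℝ} (hF : AEStronglyMeasurable F (μ.prod ν)) (hG : Integrable G ν)
    (hFG : ∀ᵐ a ∂μ, ∀ᵐ b ∂ν, ‖F (a, b)‖ ≤ G b) : Integrable F (μ.prod ν) := by
  refine (integrable_prod_iff hF).2 ⟨?_, ?_⟩
  · filter_upwards [hF.prodMk_left, hFG] with a hFa hFGa using hG.mono' hFa hFGa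
  · refine (integrable_const (∫ b, G b ∂ν)).mono' hF.norm.integral_prod_right' ?_
    filter_upwards [hFG] with a hFGa
    rw [Real.norm_of_nonneg (integral_nonneg fun _ => norm_nonneg _)]
    exact integral_mono_of_nonneg (.of_forall fun _ => norm_nonneg _) hG hFGa

section FiniteMeasureOnIcc

variable {A : Measure ℝ} [IsFiniteMeasure A] {a b : ℝ}

lemma integrable_of_continuousOn_Icc (hA : ∀ᵐ t ∂A, t ∈ Icc a b) {u : ℝ → ℝ}
    (hu : ContinuousOn u (Icc a b)) : Integrable u A := by
  rw [← Measure.restrict_eq_self_of_ae_mem hA]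
  exact hu.integrableOn_compact isCompact_Icc

lemma mul_integral_le_of_forall_eq (hA : ∀ᵐ t ∂A, t ∈ Icc a b) {u γ J R : ℝ → ℝ} {μ h M : ℝ}
    (hu : ContinuousOn u (Icc a b)) (hγ : ContinuousOn γ (Icc a b)) (hR : Integrable R A)
    (heq : ∀ t ∈ Icc a b, μ * u t = γ t * h + J t) (hJ : ∀ t ∈ Icc a b, J t ≤ M * R t) :
    μ * ∫ t, u t ∂A ≤ (∫ t, γ t ∂A) * h + M * ∫ t, R t ∂A := by
  have hγ_int := (integrable_of_continuousOn_Icc hA hγ).mul_const h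
  calc μ * ∫ t, u t ∂A = ∫ t, μ * u t ∂A := (integral_const_mul _ _).symm
    _ ≤ ∫ t, (γ t * h + M * R t) ∂A := by
      refine integral_mono_ae ((integrable_of_continuousOn_Icc hA hu).const_mul μ)
        (hγ_int.add (hR.const_mul M)) ?_
      filter_upwards [hA] with t ht
      rw [heq t ht]
      exact add_le_add le_rfl (hJ t ht)
    _ = (∫ t, γ t ∂A) * h + M * ∫ t, R t ∂A := by
      rw [integral_add hγ_int (hR.const_mul M), integral_mul_const, integral_const_mul]

end FiniteMeasureOnIcc

section Kernel

variable {k : ℝ → ℝ → ℝ} {g Φ : ℝ → ℝ}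

lemma kernel_mul_mem_Icc (hk_pos : ∀ t ∈ Icc (0:ℝ) 1, ∀ s ∈ Icc (0:ℝ) 1, 0 < k t s)
    (hkΦ : ∀ t ∈ Icc (0:ℝ) 1, ∀ᵐ s ∂(volume.restrict (Icc (0:ℝ) 1)), k t s ≤ Φ s)
    (hg : ∀ᵐ s ∂(volume.restrict (Icc (0:ℝ) 1)), 0 ≤ g s) :
    ∀ t ∈ Icc (0:ℝ) 1, ∀ᵐ s ∂(volume.restrict (Icc (0:ℝ) 1)), k t s * g s ∈ Icc 0 (g s * Φ s) := by
  intro t ht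
  filter_upwards [hkΦ t ht, hg, ae_restrict_mem measurableSet_Icc] with s hks hgs hs
  exact ⟨mul_nonneg (hk_pos t ht s hs).le hgs, by rw [mul_comm (g s)]; gcongr⟩

variable (hk : Measurable (Function.uncurry k)) (hg : Measurable g)
  (hgΦ : IntegrableOn (fun s => g s * Φ s) (Icc (0:ℝ) 1))
  (hkg : ∀ t ∈ Icc (0:ℝ) 1, ∀ᵐ s ∂(volume.restrict (Icc (0:ℝ) 1)), k t s * g s ∈ Icc 0 (g s * Φ s))

include hgΦ hkg in
lemma intervalIntegral_kernel_le {t : ℝ} (ht : t ∈ Icc (0:ℝ) 1) :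
    ∫ s in (0:ℝ)..1, k t s * g s ≤ ∫ s in Icc (0:ℝ) 1, g s * Φ s := by
  rw [intervalIntegral_eq_integral_Icc zero_le_one]
  exact integral_mono_of_nonneg ((hkg t ht).mono fun _ h => h.1) hgΦ
    ((hkg t ht).mono fun _ h => h.2)

include hk hg hgΦ hkg in
lemma intervalIntegral_kernel_mul_le {t M : ℝ} (ht : t ∈ Icc (0:ℝ) 1) {F : ℝ → ℝ}
    (hF : ∀ᵐ s ∂(volume.restrict (Icc (0:ℝ) 1)), F s ∈ Icc 0 M) :
    ∫ s in (0:ℝ)..1, k t s * g s * F s ≤ M * ∫ s in (0:ℝ)..1, k t s * g s := by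
  simp only [intervalIntegral_eq_integral_Icc zero_le_one]
  refine integral_mul_le_const_mul_integral ?_ ((hkg t ht).mono fun _ h => h.1) hF
  exact hgΦ.mono' ((hk.comp measurable_prodMk_left).mul hg).aestronglyMeasurable
    ((hkg t ht).mono fun _ h => (Real.norm_of_nonneg h.1).trans_le h.2)

variable {A : Measure ℝ} [IsFiniteMeasure A] (hA : ∀ᵐ t ∂A, t ∈ Icc (0:ℝ) 1)

include hk hg hgΦ hkg hA in
lemma integrable_kernel_prod :
    Integrable (Function.uncurry fun t s => k t s * g s) (A.prod (volume.restrict (Icc 0 1))) := by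
  refine integrable_prod_of_ae_norm_le
    (hk.mul (hg.comp measurable_snd)).aestronglyMeasurable hgΦ ?_
  filter_upwards [hA] with t ht
  filter_upwards [hkg t ht] with s hs
  simpa only [Function.uncurry_apply_pair, Real.norm_of_nonneg hs.1] using hs.2

include hk hg hgΦ hkg hA in
lemma integrable_intervalIntegral_kernel :
    Integrable (fun t => ∫ s in (0:ℝ)..1, k t s * g s) A := by
  simpa only [intervalIntegral_eq_integral_Icc zero_le_one, Function.uncurry_apply_pair] using
    (integrable_kernel_prod hk hg hgΦ hkg hA).integral_prod_left

include hk hg hgΦ hkg hA in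
lemma integral_intervalIntegral_kernel :
    ∫ t, (∫ s in (0:ℝ)..1, k t s * g s) ∂A = ∫ s in (0:ℝ)..1, (∫ t, k t s ∂A) * g s := by
  simp only [intervalIntegral_eq_integral_Icc zero_le_one, ← integral_mul_const]
  exact integral_integral_swap (integrable_kernel_prod hk hg hgΦ hkg hA)

end Kernel

theorem stmt0_general
    (k : ℝ → ℝ → ℝ) (g : ℝ → ℝ) (f : ℝ → ℝ → ℝ) (Φ γ : ℝ → ℝ) (c₁ c₂ c : ℝ)
    (H : (ℝ → ℝ) → ℝ) (K : Set (ℝ → ℝ))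
    (hk_meas : Measurable (Function.uncurry k))
    (hk_pos : ∀ t ∈ Icc (0:ℝ) 1, ∀ s ∈ Icc (0:ℝ) 1, 0 < k t s)
    (hc₁ : c₁ ∈ Ioc (0:ℝ) 1)
    (hkΦ : ∀ t ∈ Icc (0:ℝ) 1, ∀ᵐ s ∂(volume.restrict (Icc (0:ℝ) 1)),
      c₁ * Φ s ≤ k t s ∧ k t s ≤ Φ s)
    (hg_meas : Measurable g)
    (hg_nonneg : ∀ᵐ s ∂(volume.restrict (Icc (0:ℝ) 1)), 0 ≤ g s)
    (hgΦ_int : IntegrableOn (fun s => g s * Φ s) (Icc (0:ℝ) 1))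
    (hf_nonneg : ∀ t u : ℝ, 0 ≤ u → 0 ≤ f t u)
    (hγ_cont : ContinuousOn γ (Icc (0:ℝ) 1))
    (hc₂ : c₂ ∈ Ioc (0:ℝ) 1)
    (hγ_low : ∀ t ∈ Icc (0:ℝ) 1, c₂ * nrm γ ≤ γ t)
    (hc : c = min c₁ c₂)
    (hK : K = {u : ℝ → ℝ | ContinuousOn u (Icc (0:ℝ) 1) ∧ c * nrm u ≤ minOnIcc u 0 1})
    (ρ : ℝ) (hρ : 0 < ρ) (hI1 : CondI1 k g f γ H K c ρ) :
    ∀ u ∈ K, nrm u = ρ → ∀ μ : ℝ, 1 ≤ μ →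
      ¬ (∀ t ∈ Icc (0:ℝ) 1, μ * u t = Tham k g f γ H u t) := by
  obtain ⟨A, hA_fin, hA_supp, hαγ, hHα, fb, hfb, hfbS⟩ := hI1
  intro u hu hnu μ hμ hTu
  obtain ⟨hu_cont, hu_min⟩ := hK ▸ hu
  have hA : ∀ᵐ t ∂A, t ∈ Icc (0:ℝ) 1 := mem_ae_iff.2 hA_supp
  have hc0 : 0 ≤ c := hc ▸ le_min hc₁.1.le hc₂.1.le
  have hu_mem (t) (ht : t ∈ Icc (0:ℝ) 1) : u t ∈ Icc (c * ρ) ρ :=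
    hnu ▸ mem_Icc_of_mul_nrm_le_minOnIcc hu_cont hu_min ht
  obtain ⟨t₀, ht₀, hut₀⟩ := hnu ▸ exists_eq_nrm_of_mul_nrm_le_minOnIcc hc0 hu_cont hu_min
  have : (ae (volume.restrict (Icc (0:ℝ) 1))).NeBot := ae_restrict_neBot.2 (by simp)
  have hfb0 : 0 ≤ fb := nonneg_of_ae_le_mul hf_nonneg hρ (hut₀ ▸ (hu_mem t₀ ht₀).1) hfb
  have hkg := kernel_mul_mem_Icc hk_pos (fun t ht => (hkΦ t ht).mono fun _ h => h.2) hg_nonneg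
  -- No measurability of `s ↦ f s (u s)` is needed: a non-integrable integrand has integral `0`.
  have hJ (t) (ht : t ∈ Icc (0:ℝ) 1) :
      ∫ s in (0:ℝ)..1, k t s * g s * f s (u s) ≤ fb * ρ * ∫ s in (0:ℝ)..1, k t s * g s := by
    refine intervalIntegral_kernel_mul_le hk_meas hg_meas hgΦ_int hkg ht ?_
    filter_upwards [hfb, ae_restrict_mem measurableSet_Icc] with s hfs hs
    obtain ⟨hus_low, hus_up⟩ := hu_mem s hs
    exact ⟨hf_nonneg s _ ((mul_nonneg hc0 hρ.le).trans hus_low), hfs _ hus_low hus_up⟩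
  set Q := ∫ s in (0:ℝ)..1, (∫ t, k t s ∂A) * g s
  have hαu : 0 ≤ ∫ t, u t ∂A :=
    integral_nonneg_of_ae <| hA.mono fun t ht => (mul_nonneg hc0 hρ.le).trans (hu_mem t ht).1
  have hαμ := integral_intervalIntegral_kernel hk_meas hg_meas hgΦ_int hkg hA ▸
    mul_integral_le_of_forall_eq hA hu_cont hγ_cont
      (integrable_intervalIntegral_kernel hk_meas hg_meas hgΦ_int hkg hA) hTu hJ
  have hHu : H u ≤ fb * ρ * Q / (1 - ∫ t, γ t ∂A) :=
    le_div_one_sub_of_mul_le (hHα u hu hnu) hαu hμ hαγ hαμ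
  have hS := le_csSup (bddAbove_image_add_of_le ((hγ_cont.div_const (1 - ∫ t, γ t ∂A)).mul_const Q)
    fun t ht => intervalIntegral_kernel_le hgΦ_int hkg ht) (mem_image_of_mem _ ht₀)
  have hγ0 : 0 ≤ γ t₀ := (mul_nonneg hc₂.1.le (nrm_nonneg γ)).trans (hγ_low t₀ ht₀)
  refine lt_irrefl (μ * ρ) ?_
  calc μ * ρ = γ t₀ * H u + ∫ s in (0:ℝ)..1, k t₀ s * g s * f s (u s) := hut₀ ▸ hTu t₀ ht₀
    _ ≤ γ t₀ * (fb * ρ * Q / (1 - ∫ t, γ t ∂A)) + fb * ρ * ∫ s in (0:ℝ)..1, k t₀ s * g s :=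
      add_le_add (mul_le_mul_of_nonneg_left hHu hγ0) (hJ t₀ ht₀)
    _ = fb * ρ * (γ t₀ / (1 - ∫ t, γ t ∂A) * Q + ∫ s in (0:ℝ)..1, k t₀ s * g s) := by ring
    _ ≤ fb * ρ * sSup ((fun t => γ t / (1 - ∫ t', γ t' ∂A) * Q +
          ∫ s in (0:ℝ)..1, k t s * g s) '' Icc 0 1) :=
      mul_le_mul_of_nonneg_left hS (by positivity)
    _ < ρ := by nlinarith
    _ ≤ μ * ρ := le_mul_of_one_le_left hρ.le hμ

theorem stmt0
    (k : ℝ → ℝ → ℝ) (g : ℝ → ℝ) (f : ℝ → ℝ → ℝ) (Φ γ : ℝ → ℝ) (c₁ c₂ c : ℝ)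
    (H : (ℝ → ℝ) → ℝ) (K : Set (ℝ → ℝ))
    (hk_meas : Measurable (Function.uncurry k))
    (hk_pos : ∀ t ∈ Icc (0:ℝ) 1, ∀ s ∈ Icc (0:ℝ) 1, 0 < k t s)
    (hk_cont : ∀ τ ∈ Icc (0:ℝ) 1, ∀ᵐ s ∂(volume.restrict (Icc (0:ℝ) 1)),
      Filter.Tendsto (fun t => |k t s - k τ s|) (nhdsWithin τ (Icc (0:ℝ) 1)) (nhds 0))
    (hΦ_meas : Measurable Φ)
    (hΦ_bdd : ∃ C, ∀ᵐ s ∂(volume.restrict (Icc (0:ℝ) 1)), |Φ s| ≤ C)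
    (hc₁ : c₁ ∈ Ioc (0:ℝ) 1)
    (hkΦ : ∀ t ∈ Icc (0:ℝ) 1, ∀ᵐ s ∂(volume.restrict (Icc (0:ℝ) 1)),
      c₁ * Φ s ≤ k t s ∧ k t s ≤ Φ s)
    (hg_meas : Measurable g)
    (hg_nonneg : ∀ᵐ s ∂(volume.restrict (Icc (0:ℝ) 1)), 0 ≤ g s)
    (hgΦ_int : IntegrableOn (fun s => g s * Φ s) (Icc (0:ℝ) 1))
    (hΦg_pos : 0 < ∫ s in (0:ℝ)..1, Φ s * g s)
    (hf_meas : ∀ u : ℝ, Measurable (fun t => f t u))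
    (hf_cont : ∀ᵐ t ∂(volume.restrict (Icc (0:ℝ) 1)), ContinuousOn (f t) (Ici 0))
    (hf_nonneg : ∀ t u : ℝ, 0 ≤ u → 0 ≤ f t u)
    (hf_bdd : ∀ r > 0, ∃ C, ∀ᵐ t ∂(volume.restrict (Icc (0:ℝ) 1)), ∀ u ∈ Icc (0:ℝ) r, f t u ≤ C)
    (hγ_cont : ContinuousOn γ (Icc (0:ℝ) 1))
    (hc₂ : c₂ ∈ Ioc (0:ℝ) 1)
    (hγ_low : ∀ t ∈ Icc (0:ℝ) 1, c₂ * nrm γ ≤ γ t)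
    (hc : c = min c₁ c₂)
    (hK : K = {u : ℝ → ℝ | ContinuousOn u (Icc (0:ℝ) 1) ∧ c * nrm u ≤ minOnIcc u 0 1})
    (hH_nonneg : ∀ u ∈ K, 0 ≤ H u)
    (hH_cont : ∀ u ∈ K, ∀ ε > 0, ∃ δ > 0, ∀ v ∈ K,
      nrm (fun t => u t - v t) < δ → |H u - H v| < ε)
    (hH_bdd : ∀ M : ℝ, ∃ M', ∀ u ∈ K, nrm u ≤ M → H u ≤ M')
    (ρ : ℝ) (hρ : 0 < ρ) (hI1 : CondI1 k g f γ H K c ρ) :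
    ∀ u ∈ K, nrm u = ρ → ∀ μ : ℝ, 1 ≤ μ →
      ¬ (∀ t ∈ Icc (0:ℝ) 1, μ * u t = Tham k g f γ H u t) :=
  stmt0_general k g f Φ γ c₁ c₂ c H K hk_meas hk_pos hc₁ hkΦ hg_meas hg_nonneg hgΦ_int hf_nonneg
    hγ_cont hc₂ hγ_low hc hK ρ hρ hI1
end

section
/- For all ρ₁, ρ₂ > 0 the sets K_{ρ₁,ρ₂} and V_{ρ₁,ρ₂} have the following properties, where boundaries ∂ are taken relative to the subspace topology on K: (1) K_{ρ₁,ρ₂} ⊆ V_{ρ₁,ρ₂} ⊆ K_{ρ₁/c₁, ρ₂/c₂}; (2) (w₁,w₂) ∈ ∂V_{ρ₁,ρ₂} if and only if (w₁,w₂) ∈ K and min_{t∈[a_i,b_i]} w_i(t) = ρ_i for some i ∈ {1,2} while min_{t∈[a_j,b_j]} w_j(t) ≤ ρ_j for j ≠ i; (3) if (w₁,w₂) ∈ ∂V_{ρ₁,ρ₂}, then for some i ∈ {1,2} one has ρ_i ≤ w_i(t) ≤ ρ_i/c_i for each t ∈ [a_i,b_i], and for j ≠ i one has 0 ≤ w_j(t)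 ≤ ρ_j/c_j for each t ∈ [a_j,b_j]; (4) (w₁,w₂) ∈ ∂K_{ρ₁,ρ₂} if and only if (w₁,w₂) ∈ K and ‖w_i‖ = ρ_i for some i ∈ {1,2} while ‖w_j‖ ≤ ρ_j for j ≠ i. -/
/-!
Both `K_{ρ₁,ρ₂}` and `V_{ρ₁,ρ₂}` are strict sublevel sets `{f₁ < ρ₁, f₂ < ρ₂}` of a pair of
continuous, positively homogeneous functionals on the cone `K` (the norms, resp. the minima over
`[aᵢ, bᵢ]`, which are 1-Lipschitz). Scaling by `r ↑ 1` inside the cone shows that their closure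
is `{f₁ ≤ ρ₁, f₂ ≤ ρ₂}`, and being open their frontier is the closure minus the set. Nesting and
the pointwise bounds follow from `cᵢ ‖wᵢ‖ ≤ min_{[aᵢ,bᵢ]} wᵢ ≤ ‖wᵢ‖`.
-/

open Set

/-- The unit interval `[0,1]` as a type. -/
abbrev I01 := Set.Icc (0:ℝ) 1

/-- Minimum (infimum) of a continuous function `w : C([0,1],ℝ)` over the points of `[0,1]`
lying in `[a,b]`. -/
noncomputable def cmin (w : C(I01, ℝ)) (a b : ℝ) : ℝ :=
  sInf ((fun t : I01 => w t) '' {t : I01 | a ≤ (t : ℝ) ∧ (t : ℝ) ≤ b})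

open Filter Topology

section Frontier

variable {X : Type*} [TopologicalSpace X] {f g : X → ℝ} {ρ₁ ρ₂ : ℝ}

theorem frontier_setOf_lt_and_lt (hf : Continuous f) (hg : Continuous g)
    (hcl : ∀ x, f x ≤ ρ₁ → g x ≤ ρ₂ → x ∈ closure {x | f x < ρ₁ ∧ g x < ρ₂}) :
    frontier {x | f x < ρ₁ ∧ g x < ρ₂} =
      {x | (f x = ρ₁ ∧ g x ≤ ρ₂) ∨ (g x = ρ₂ ∧ f x ≤ ρ₁)} := by
  have hopen : IsOpen {x | f x < ρ₁ ∧ g x < ρ₂} :=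
    (isOpen_lt hf continuous_const).inter (isOpen_lt hg continuous_const)
  have hclosed : IsClosed {x | f x ≤ ρ₁ ∧ g x ≤ ρ₂} :=
    (isClosed_le hf continuous_const).inter (isClosed_le hg continuous_const)
  have hclosure : closure {x | f x < ρ₁ ∧ g x < ρ₂} = {x | f x ≤ ρ₁ ∧ g x ≤ ρ₂} := by
    refine (closure_minimal ?_ hclosed).antisymm fun x hx => hcl x hx.1 hx.2
    exact fun x hx => ⟨hx.1.le, hx.2.le⟩
  rw [hopen.frontier_eq, hclosure]
  ext x
  simp only [Set.mem_sdiff, Set.mem_ofPred_eq, not_and_or, not_lt]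
  constructor
  · rintro ⟨⟨h₁, h₂⟩, h₁' | h₂'⟩
    · exact Or.inl ⟨le_antisymm h₁ h₁', h₂⟩
    · exact Or.inr ⟨le_antisymm h₂ h₂', h₁⟩
  · rintro (⟨rfl, h₂⟩ | ⟨rfl, h₁⟩)
    · exact ⟨⟨le_rfl, h₂⟩, Or.inl le_rfl⟩
    · exact ⟨⟨h₁, le_rfl⟩, Or.inr le_rfl⟩

end Frontier

section Cone

variable {E : Type*} [AddCommMonoid E] [Module ℝ E] [TopologicalSpace E] [ContinuousSMul ℝ E]
  {K : Set E} {f g : E → ℝ} {ρ₁ ρ₂ : ℝ}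

theorem mem_closure_setOf_lt_and_lt_of_smul_mem (hK : ∀ x ∈ K, ∀ r : ℝ, 0 ≤ r → r • x ∈ K)
    (hf : ∀ x, ∀ r : ℝ, 0 ≤ r → f (r • x) = r * f x)
    (hg : ∀ x, ∀ r : ℝ, 0 ≤ r → g (r • x) = r * g x)
    (hρ₁ : 0 < ρ₁) (hρ₂ : 0 < ρ₂) {x : K} (h₁ : f x ≤ ρ₁) (h₂ : g x ≤ ρ₂) :
    x ∈ closure {y : K | f y < ρ₁ ∧ g y < ρ₂} := by
  rw [closure_subtype]
  have htendsto : Tendsto (fun r : ℝ => r • (x : E)) (𝓝[<] 1) (𝓝 x) :=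
    ((continuous_id.smul continuous_const).tendsto' 1 (x : E) (one_smul ℝ _)).mono_left
      nhdsWithin_le_nhds
  refine mem_closure_of_tendsto htendsto ?_
  filter_upwards [Ioo_mem_nhdsLT (zero_lt_one' ℝ)] with r ⟨hr₀, hr₁⟩
  refine ⟨⟨r • x, hK x x.2 r hr₀.le⟩, ⟨?_, ?_⟩, rfl⟩
  · show f (r • x) < ρ₁
    rw [hf x r hr₀.le]
    nlinarith
  · show g (r • x) < ρ₂
    rw [hg x r hr₀.le]
    nlinarith

theorem frontier_setOf_lt_and_lt_of_smul_mem (hK : ∀ x ∈ K, ∀ r : ℝ, 0 ≤ r → r • x ∈ K)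
    (hfc : Continuous f) (hgc : Continuous g)
    (hf : ∀ x, ∀ r : ℝ, 0 ≤ r → f (r • x) = r * f x)
    (hg : ∀ x, ∀ r : ℝ, 0 ≤ r → g (r • x) = r * g x) (hρ₁ : 0 < ρ₁) (hρ₂ : 0 < ρ₂) :
    frontier {x : K | f x < ρ₁ ∧ g x < ρ₂} =
      {x : K | (f x = ρ₁ ∧ g x ≤ ρ₂) ∨ (g x = ρ₂ ∧ f x ≤ ρ₁)} :=
  frontier_setOf_lt_and_lt (hfc.comp continuous_subtype_val) (hgc.comp continuous_subtype_val)
    fun _ => mem_closure_setOf_lt_and_lt_of_smul_mem hK hf hg hρ₁ hρ₂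

end Cone

theorem cmin_le_apply (w : C(I01, ℝ)) {a b : ℝ} {t : I01} (ha : a ≤ t) (hb : (t : ℝ) ≤ b) :
    cmin w a b ≤ w t :=
  csInf_le ⟨-‖w‖, by rintro _ ⟨s, -, rfl⟩; exact neg_le_of_abs_le (w.norm_coe_le_norm s)⟩
    ⟨t, ⟨ha, hb⟩, rfl⟩

theorem apply_le_norm (w : C(I01, ℝ)) (t : I01) : w t ≤ ‖w‖ :=
  le_of_abs_le (w.norm_coe_le_norm t)

theorem cmin_le_norm (w : C(I01, ℝ)) (a b : ℝ) : cmin w a b ≤ ‖w‖ := by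
  rcases eq_empty_or_nonempty {t : I01 | a ≤ (t : ℝ) ∧ (t : ℝ) ≤ b} with h | ⟨t, ht⟩
  · simp [cmin, h]
  · exact (cmin_le_apply w ht.1 ht.2).trans (apply_le_norm w t)

theorem cmin_smul (w : C(I01, ℝ)) (a b : ℝ) {r : ℝ} (hr : 0 ≤ r) :
    cmin (r • w) a b = r * cmin w a b := by
  rw [cmin, cmin, ← smul_eq_mul, ← Real.sInf_smul_of_nonneg hr, ← image_smul, image_image]
  rfl

theorem cmin_le_cmin_add_norm_sub (u v : C(I01, ℝ)) (a b : ℝ) :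
    cmin u a b ≤ cmin v a b + ‖u - v‖ := by
  rcases eq_empty_or_nonempty {t : I01 | a ≤ (t : ℝ) ∧ (t : ℝ) ≤ b} with h | hne
  · simp [cmin, h]
  · rw [← sub_le_iff_le_add]
    refine le_csInf (hne.image _) ?_
    rintro _ ⟨t, ht, rfl⟩
    have hut := cmin_le_apply u ht.1 ht.2
    have huv : u t - v t ≤ ‖u - v‖ := le_of_abs_le ((u - v).norm_coe_le_norm t)
    linarith

theorem lipschitzWith_one_cmin (a b : ℝ) : LipschitzWith 1 fun w : C(I01, ℝ) => cmin w a b :=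
  LipschitzWith.of_le_add fun u v => by
    simpa [dist_eq_norm] using cmin_le_cmin_add_norm_sub u v a b

/-- The cone `K̃ᵢ` of the paper, for `(c, a, b) = (cᵢ, aᵢ, bᵢ)`. -/
def cminCone (c a b : ℝ) : Set C(I01, ℝ) := {w | c * ‖w‖ ≤ cmin w a b}

section CminCone

variable {w : C(I01, ℝ)} {a b c ρ : ℝ}

theorem smul_mem_cminCone (hw : w ∈ cminCone c a b) {r : ℝ} (hr : 0 ≤ r) :
    r • w ∈ cminCone c a b := by
  have : r * (c * ‖w‖) ≤ r * cmin w a b := mul_le_mul_of_nonneg_left hw hr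
  show c * ‖r • w‖ ≤ cmin (r • w) a b
  rw [norm_smul, Real.norm_of_nonneg hr, cmin_smul w a b hr]
  linarith

theorem cmin_nonneg_of_mem_cminCone (hw : w ∈ cminCone c a b) (hc : 0 ≤ c) :
    0 ≤ cmin w a b :=
  (mul_nonneg hc (norm_nonneg w)).trans hw

theorem norm_le_div_of_mem_cminCone (hw : w ∈ cminCone c a b) (hc : 0 < c)
    (hρ : cmin w a b ≤ ρ) : ‖w‖ ≤ ρ / c := by
  rw [le_div_iff₀' hc]
  exact hw.trans hρ

theorem norm_lt_div_of_mem_cminCone (hw : w ∈ cminCone c a b) (hc : 0 < c)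
    (hρ : cmin w a b < ρ) : ‖w‖ < ρ / c := by
  rw [lt_div_iff₀' hc]
  exact hw.trans_lt hρ

theorem le_apply_and_apply_le_div_of_mem_cminCone {lo : ℝ} (hw : w ∈ cminCone c a b)
    (hc : 0 < c) (hρ : cmin w a b ≤ ρ) (hlo : lo ≤ cmin w a b) :
    ∀ t : I01, a ≤ t → t ≤ b → lo ≤ w t ∧ w t ≤ ρ / c := fun t ha hb =>
  ⟨hlo.trans (cmin_le_apply w ha hb),
    (apply_le_norm w t).trans (norm_le_div_of_mem_cminCone hw hc hρ)⟩

end CminCone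

theorem stmt9_general (a₁ b₁ a₂ b₂ c₁ c₂ : ℝ)
    (hc₁ : c₁ ∈ Ioc (0:ℝ) 1) (hc₂ : c₂ ∈ Ioc (0:ℝ) 1)
    (K : Set (C(I01, ℝ) × C(I01, ℝ)))
    (hK : K = {w : C(I01, ℝ) × C(I01, ℝ) |
      c₁ * ‖w.1‖ ≤ cmin w.1 a₁ b₁ ∧ c₂ * ‖w.2‖ ≤ cmin w.2 a₂ b₂})
    (ρ₁ ρ₂ : ℝ) (hρ₁ : 0 < ρ₁) (hρ₂ : 0 < ρ₂)
    (KR VR : Set K)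
    (hKR : KR = {w : K | ‖(w : C(I01, ℝ) × C(I01, ℝ)).1‖ < ρ₁ ∧
      ‖(w : C(I01, ℝ) × C(I01, ℝ)).2‖ < ρ₂})
    (hVR : VR = {w : K | cmin (w : C(I01, ℝ) × C(I01, ℝ)).1 a₁ b₁ < ρ₁ ∧
      cmin (w : C(I01, ℝ) × C(I01, ℝ)).2 a₂ b₂ < ρ₂}) :
    -- (1) nesting
    (KR ⊆ VR ∧
      VR ⊆ {w : K | ‖(w : C(I01, ℝ) × C(I01, ℝ)).1‖ < ρ₁ / c₁ ∧
        ‖(w : C(I01, ℝ) × C(I01, ℝ)).2‖ < ρ₂ / c₂}) ∧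
    -- (2) boundary of V
    (∀ w : K, w ∈ frontier VR ↔
      ((cmin (w : C(I01, ℝ) × C(I01, ℝ)).1 a₁ b₁ = ρ₁ ∧
        cmin (w : C(I01, ℝ) × C(I01, ℝ)).2 a₂ b₂ ≤ ρ₂) ∨
       (cmin (w : C(I01, ℝ) × C(I01, ℝ)).2 a₂ b₂ = ρ₂ ∧
        cmin (w : C(I01, ℝ) × C(I01, ℝ)).1 a₁ b₁ ≤ ρ₁))) ∧
    -- (3) pointwise bounds on the boundary of V
    (∀ w : K, w ∈ frontier VR →
      (((∀ t : I01, a₁ ≤ (t : ℝ) → (t : ℝ) ≤ b₁ →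
          ρ₁ ≤ (w : C(I01, ℝ) × C(I01, ℝ)).1 t ∧ (w : C(I01, ℝ) × C(I01, ℝ)).1 t ≤ ρ₁ / c₁) ∧
        (∀ t : I01, a₂ ≤ (t : ℝ) → (t : ℝ) ≤ b₂ →
          0 ≤ (w : C(I01, ℝ) × C(I01, ℝ)).2 t ∧ (w : C(I01, ℝ) × C(I01, ℝ)).2 t ≤ ρ₂ / c₂)) ∨
       ((∀ t : I01, a₂ ≤ (t : ℝ) → (t : ℝ) ≤ b₂ →
          ρ₂ ≤ (w : C(I01, ℝ) × C(I01, ℝ)).2 t ∧ (w : C(I01, ℝ) × C(I01, ℝ)).2 t ≤ ρ₂ / c₂) ∧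
        (∀ t : I01, a₁ ≤ (t : ℝ) → (t : ℝ) ≤ b₁ →
          0 ≤ (w : C(I01, ℝ) × C(I01, ℝ)).1 t ∧ (w : C(I01, ℝ) × C(I01, ℝ)).1 t ≤ ρ₁ / c₁)))) ∧
    -- (4) boundary of K_{ρ₁,ρ₂}
    (∀ w : K, w ∈ frontier KR ↔
      ((‖(w : C(I01, ℝ) × C(I01, ℝ)).1‖ = ρ₁ ∧ ‖(w : C(I01, ℝ) × C(I01, ℝ)).2‖ ≤ ρ₂) ∨
       (‖(w : C(I01, ℝ) × C(I01, ℝ)).2‖ = ρ₂ ∧ ‖(w : C(I01, ℝ) × C(I01, ℝ)).1‖ ≤ ρ₁))) := by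
  subst hKR hVR
  obtain ⟨hc₁, -⟩ := hc₁
  obtain ⟨hc₂, -⟩ := hc₂
  replace hK : K = cminCone c₁ a₁ b₁ ×ˢ cminCone c₂ a₂ b₂ := hK
  have hcone : ∀ w ∈ K, ∀ r : ℝ, 0 ≤ r → r • w ∈ K := by
    subst hK
    exact fun w hw r hr => ⟨smul_mem_cminCone hw.1 hr, smul_mem_cminCone hw.2 hr⟩
  have hmem : ∀ w : K, w.1.1 ∈ cminCone c₁ a₁ b₁ ∧ w.1.2 ∈ cminCone c₂ a₂ b₂ := by
    subst hK
    exact fun w => w.2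
  have hV := frontier_setOf_lt_and_lt_of_smul_mem (f := fun p => cmin p.1 a₁ b₁)
    (g := fun p => cmin p.2 a₂ b₂) hcone
    (lipschitzWith_one_cmin a₁ b₁).continuous.fst'
    (lipschitzWith_one_cmin a₂ b₂).continuous.snd'
    (fun p _ hr => cmin_smul p.1 a₁ b₁ hr) (fun p _ hr => cmin_smul p.2 a₂ b₂ hr) hρ₁ hρ₂
  have hKρ := frontier_setOf_lt_and_lt_of_smul_mem (f := fun p => ‖p.1‖) (g := fun p => ‖p.2‖)
    hcone continuous_norm.fst' continuous_norm.snd'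
    (fun p _ hr => norm_smul_of_nonneg hr p.1) (fun p _ hr => norm_smul_of_nonneg hr p.2) hρ₁ hρ₂
  refine ⟨⟨fun w hw => ?_, fun w hw => ?_⟩, fun w => Set.ext_iff.mp hV w, fun w hw => ?_,
    fun w => Set.ext_iff.mp hKρ w⟩
  · exact ⟨(cmin_le_norm _ a₁ b₁).trans_lt hw.1, (cmin_le_norm _ a₂ b₂).trans_lt hw.2⟩
  · exact ⟨norm_lt_div_of_mem_cminCone (hmem w).1 hc₁ hw.1,
      norm_lt_div_of_mem_cminCone (hmem w).2 hc₂ hw.2⟩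
  rcases (Set.ext_iff.mp hV w).mp hw with ⟨hm₁, hm₂⟩ | ⟨hm₂, hm₁⟩
  · exact Or.inl ⟨le_apply_and_apply_le_div_of_mem_cminCone (hmem w).1 hc₁ hm₁.le hm₁.ge,
      le_apply_and_apply_le_div_of_mem_cminCone (hmem w).2 hc₂ hm₂
        (cmin_nonneg_of_mem_cminCone (hmem w).2 hc₂.le)⟩
  · exact Or.inr ⟨le_apply_and_apply_le_div_of_mem_cminCone (hmem w).2 hc₂ hm₂.le hm₂.ge,
      le_apply_and_apply_le_div_of_mem_cminCone (hmem w).1 hc₁ hm₁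
        (cmin_nonneg_of_mem_cminCone (hmem w).1 hc₁.le)⟩

theorem stmt9 (a₁ b₁ a₂ b₂ c₁ c₂ : ℝ)
    (ha₁ : 0 ≤ a₁) (hab₁ : a₁ ≤ b₁) (hb₁ : b₁ ≤ 1)
    (ha₂ : 0 ≤ a₂) (hab₂ : a₂ ≤ b₂) (hb₂ : b₂ ≤ 1)
    (hc₁ : c₁ ∈ Ioc (0:ℝ) 1) (hc₂ : c₂ ∈ Ioc (0:ℝ) 1)
    (K : Set (C(I01, ℝ) × C(I01, ℝ)))
    (hK : K = {w : C(I01, ℝ) × C(I01, ℝ) |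
      c₁ * ‖w.1‖ ≤ cmin w.1 a₁ b₁ ∧ c₂ * ‖w.2‖ ≤ cmin w.2 a₂ b₂})
    (ρ₁ ρ₂ : ℝ) (hρ₁ : 0 < ρ₁) (hρ₂ : 0 < ρ₂)
    (KR VR : Set K)
    (hKR : KR = {w : K | ‖(w : C(I01, ℝ) × C(I01, ℝ)).1‖ < ρ₁ ∧
      ‖(w : C(I01, ℝ) × C(I01, ℝ)).2‖ < ρ₂})
    (hVR : VR = {w : K | cmin (w : C(I01, ℝ) × C(I01, ℝ)).1 a₁ b₁ < ρ₁ ∧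
      cmin (w : C(I01, ℝ) × C(I01, ℝ)).2 a₂ b₂ < ρ₂}) :
    -- (1) nesting
    (KR ⊆ VR ∧
      VR ⊆ {w : K | ‖(w : C(I01, ℝ) × C(I01, ℝ)).1‖ < ρ₁ / c₁ ∧
        ‖(w : C(I01, ℝ) × C(I01, ℝ)).2‖ < ρ₂ / c₂}) ∧
    -- (2) boundary of V
    (∀ w : K, w ∈ frontier VR ↔
      ((cmin (w : C(I01, ℝ) × C(I01, ℝ)).1 a₁ b₁ = ρ₁ ∧
        cmin (w : C(I01, ℝ) × C(I01, ℝ)).2 a₂ b₂ ≤ ρ₂) ∨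
       (cmin (w : C(I01, ℝ) × C(I01, ℝ)).2 a₂ b₂ = ρ₂ ∧
        cmin (w : C(I01, ℝ) × C(I01, ℝ)).1 a₁ b₁ ≤ ρ₁))) ∧
    -- (3) pointwise bounds on the boundary of V
    (∀ w : K, w ∈ frontier VR →
      (((∀ t : I01, a₁ ≤ (t : ℝ) → (t : ℝ) ≤ b₁ →
          ρ₁ ≤ (w : C(I01, ℝ) × C(I01, ℝ)).1 t ∧ (w : C(I01, ℝ) × C(I01, ℝ)).1 t ≤ ρ₁ / c₁) ∧
        (∀ t : I01, a₂ ≤ (t : ℝ) → (t : ℝ) ≤ b₂ →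
          0 ≤ (w : C(I01, ℝ) × C(I01, ℝ)).2 t ∧ (w : C(I01, ℝ) × C(I01, ℝ)).2 t ≤ ρ₂ / c₂)) ∨
       ((∀ t : I01, a₂ ≤ (t : ℝ) → (t : ℝ) ≤ b₂ →
          ρ₂ ≤ (w : C(I01, ℝ) × C(I01, ℝ)).2 t ∧ (w : C(I01, ℝ) × C(I01, ℝ)).2 t ≤ ρ₂ / c₂) ∧
        (∀ t : I01, a₁ ≤ (t : ℝ) → (t : ℝ) ≤ b₁ →
          0 ≤ (w : C(I01, ℝ) × C(I01, ℝ)).1 t ∧ (w : C(I01, ℝ) × C(I01, ℝ)).1 t ≤ ρ₁ / c₁)))) ∧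
    -- (4) boundary of K_{ρ₁,ρ₂}
    (∀ w : K, w ∈ frontier KR ↔
      ((‖(w : C(I01, ℝ) × C(I01, ℝ)).1‖ = ρ₁ ∧ ‖(w : C(I01, ℝ) × C(I01, ℝ)).2‖ ≤ ρ₂) ∨
       (‖(w : C(I01, ℝ) × C(I01, ℝ)).2‖ = ρ₂ ∧ ‖(w : C(I01, ℝ) × C(I01, ℝ)).1‖ ≤ ρ₁))) :=
  stmt9_general a₁ b₁ a₂ b₂ c₁ c₂ hc₁ hc₂ K hK ρ₁ ρ₂ hρ₁ hρ₂ KR VR hKR hVR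
end
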